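/- arXiv:2405.09465 — 6 statements merged into one kernel-verified Lean document; each statement's English description precedes it below -/
import Mathlib

section
/- Let μ2 and r2 be real numbers with 0 < μ2 < 1/2 and 0 < r2 < 1, and let ρ be a real number with ρ > μ2. Then exp(ρ/μ2)·μ2·(r2 − 1) − μ2²·(r2 − 1) + exp(ρ/(μ2·(1 − μ2)))·(1 − μ2 + μ2²·(r2 − 1) + ρ) > 0. (This quantity, multiplied by the positive prefactor exp((1+μ2)ρ/((μ2−1)μ2)), equals the excess expected reward E[V_p^policy] − E[V_p^default] of a validator following the Flashback policy over the default policy when the primary builder's reserved rate is r1 = 0; hence validators have no incentive to deviate.) -/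
/-- Lemma 1 (validators prefer the Flashback policy): for `0 < μ2 < 1/2`,
`0 < r2 < 1` and `ρ > μ2`, the (rescaled) excess expected validator reward
`E[V_p^policy] − E[V_p^default]` at `r1 = 0` is positive. -/
theorem flashback_validator_policy_exceeds_default
    (μ2 r2 ρ : ℝ) (hμ2_pos : 0 < μ2) (hμ2_lt : μ2 < 1 / 2)
    (hr2_pos : 0 < r2) (hr2_lt : r2 < 1) (hρ : ρ > μ2) :
    Real.exp (ρ / μ2) * μ2 * (r2 - 1) - μ2 ^ 2 * (r2 - 1)
      + Real.exp (ρ / (μ2 * (1 - μ2))) * (1 - μ2 + μ2 ^ 2 * (r2 - 1) + ρ) > 0 := by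
  have hρpos : 0 < ρ := lt_trans hμ2_pos hρ
  have hm : 0 < μ2 * (1 - μ2) := by nlinarith
  have hle : μ2 * (1 - μ2) ≤ μ2 := by nlinarith
  have hdiv : ρ / μ2 ≤ ρ / (μ2 * (1 - μ2)) := by gcongr
  have hAB : Real.exp (ρ / μ2) ≤ Real.exp (ρ / (μ2 * (1 - μ2))) :=
    Real.exp_le_exp.mpr hdiv
  have hApos : 0 < Real.exp (ρ / μ2) := Real.exp_pos _
  have hC : μ2 * (1 - r2) < 1 - μ2 + μ2 ^ 2 * (r2 - 1) + ρ := by nlinarith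
  nlinarith [mul_le_mul_of_nonneg_right hAB (le_of_lt (lt_of_le_of_lt (by nlinarith : (0:ℝ) ≤ μ2 * (1 - r2)) hC)),
    mul_pos hApos (sub_pos.mpr hC), sq_nonneg μ2, mul_pos hμ2_pos hμ2_pos]
end

section
/- Let μ3 ≥ 0 and r2 > 0 be real numbers and let ρ be a real number with ρ > ln(3)/2. Then r2·((−1/4 − μ3/2 − ρ/2)·exp(−6ρ) + (3μ3/2 + 1/2 + ρ/2)·exp(−4ρ) + (−1/4 − μ3/2 − ρ/2)·exp(−2ρ)) < 0. (This quantity equals E[V_primary]·μ2 − E[V_secondary]·μ1 in the Flashback model evaluated at μ2 = 1/2, μ1 = 1/2 and reserved rate r1 = 0, so at μ2 = 1/2 the fixed-point expression is negative.) -/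
/-- Lemma 2 (fixed-point expression is negative at `μ2 = 1/2`): for `μ3 ≥ 0`,
`r2 > 0` and `ρ > ln 3 / 2`, the quantity
`E[V_primary]·μ2 − E[V_secondary]·μ1` evaluated at `μ1 = μ2 = 1/2`, `r1 = 0`
is negative. -/
theorem flashback_fixed_point_negative_at_half
    (μ3 r2 ρ : ℝ) (hμ3 : 0 ≤ μ3) (hr2 : 0 < r2) (hρ : ρ > Real.log 3 / 2) :
    r2 * ((-1 / 4 - μ3 / 2 - ρ / 2) * Real.exp (-6 * ρ)
        + (3 * μ3 / 2 + 1 / 2 + ρ / 2) * Real.exp (-4 * ρ)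
        + (-1 / 4 - μ3 / 2 - ρ / 2) * Real.exp (-2 * ρ)) < 0 := by
  have hlog : 0 < Real.log 3 := Real.log_pos (by norm_num)
  have hρ0 : 0 < ρ := lt_trans (by linarith) hρ
  set x := Real.exp (-2 * ρ) with hxdef
  have hx0 : 0 < x := Real.exp_pos _
  have hxlt : x < 1 / 3 := by
    have h1 : (-2 : ℝ) * ρ < -Real.log 3 := by linarith
    calc x < Real.exp (-Real.log 3) := Real.exp_lt_exp.mpr h1
      _ = 1 / 3 := by
        rw [Real.exp_neg, Real.exp_log (by norm_num : (0:ℝ) < 3)]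
        norm_num
  have h6 : Real.exp (-6 * ρ) = x ^ 3 := by
    rw [hxdef, show (-6:ℝ) * ρ = (-2*ρ) + (-2*ρ) + (-2*ρ) by ring,
      Real.exp_add, Real.exp_add]; ring
  have h4 : Real.exp (-4 * ρ) = x ^ 2 := by
    rw [hxdef, show (-4:ℝ) * ρ = (-2*ρ) + (-2*ρ) by ring, Real.exp_add]; ring
  rw [h6, h4]
  apply mul_neg_of_pos_of_neg hr2
  nlinarith [mul_pos hx0 hx0, mul_nonneg hμ3 hx0.le,
    mul_pos (mul_pos hx0 hx0) hx0, mul_nonneg hμ3 (mul_pos hx0 hx0).le,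
    mul_nonneg (mul_nonneg hμ3 hx0.le) hx0.le,
    mul_pos hρ0 hx0, mul_pos hρ0 (mul_pos hx0 hx0),
    mul_nonneg (sub_nonneg.mpr hxlt.le) hx0.le,
    mul_nonneg (mul_nonneg (sub_nonneg.mpr hxlt.le) hx0.le) hx0.le]
end

section
/- For every real number μ3 ≥ 0 there exists ρ0 > 0 such that for every ρ ≥ ρ0 there exists μ2 with 0 < μ2 < 1/2 and G(μ2, ρ, μ3) = 0. (That is, for r1 = 0 and all sufficiently large reservation thresholds ρ, the fixed-point equation E[V_primary]·μ2 − E[V_secondary]·μ1 = 0 with μ1 = 1 − μ2 has a solution with 0 < μ2 < 1/2, so at equilibrium the primary (Flashback) builder achieves a strictly higher score than the secondary builder.) -/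
open Real Filter Topology

/-- The simplified fixed-point expression
`(E[V_primary]·μ2 − E[V_secondary]·μ1)/r2` in the Flashback model, with
`r1 = 0` and `μ1 = 1 − μ2`. -/
noncomputable def flashbackG (μ2 ρ μ3 : ℝ) : ℝ :=
  μ2 - 3 * μ2 ^ 2 + 2 * μ2 ^ 3
    + Real.exp (ρ / (μ2 - 1)) * (4 * μ2 ^ 2 - 2 * μ2 ^ 3 - μ3 + μ2 * (-2 + μ3 - ρ))
    + Real.exp (2 * ρ / (μ2 - 1)) * (-μ2 ^ 2 + μ3 + μ2)
    + Real.exp (ρ / ((μ2 - 1) * μ2)) * (-2 * μ2 ^ 2 - 2 * μ2 ^ 3 + μ2 * (μ3 + ρ))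
    + Real.exp ((1 + μ2) * ρ / ((μ2 - 1) * μ2)) * (-2 * μ2 ^ 2 - 2 * μ2 ^ 3 - μ2 * (μ3 + ρ))

/-- For `a < 0`, `exp (a ρ) (b + c ρ) → 0` as `ρ → ∞`. -/
lemma flashback_aux_tendsto (a b c : ℝ) (ha : a < 0) :
    Tendsto (fun ρ : ℝ => Real.exp (a * ρ) * (b + c * ρ)) atTop (𝓝 0) := by
  have hlin : Tendsto (fun ρ : ℝ => -a * ρ) atTop atTop :=
    (tendsto_const_mul_atTop_of_pos (by linarith)).2 tendsto_id
  have h1 : Tendsto (fun ρ : ℝ => Real.exp (a * ρ)) atTop (𝓝 0) := by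
    have := Real.tendsto_exp_atBot.comp ((tendsto_const_mul_atBot_of_neg ha).2 tendsto_id)
    exact this.congr fun ρ => rfl
  have h2 : Tendsto (fun ρ : ℝ => ρ * Real.exp (a * ρ)) atTop (𝓝 0) := by
    have hcomp := (tendsto_pow_mul_exp_neg_atTop_nhds_zero 1).comp hlin
    have : Tendsto (fun ρ : ℝ => (-a * ρ) * Real.exp (a * ρ)) atTop (𝓝 0) := by
      refine hcomp.congr fun ρ => ?_
      simp [Function.comp, pow_one, neg_neg]
    have h3 := this.const_mul (-a)⁻¹
    simp only [mul_zero] at h3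
    refine h3.congr fun ρ => ?_
    rw [← mul_assoc, ← mul_assoc, inv_mul_cancel₀ (by simpa using ha.ne : (-a) ≠ 0), one_mul]
  have := (h1.const_mul b).add ((h2.const_mul c))
  simp only [mul_zero, add_zero] at this
  refine this.congr fun ρ => by ring

/-- At `μ2 = 1/4` the fixed-point expression tends to `3/32` as `ρ → ∞`. -/
lemma flashback_quarter_tendsto (μ3 : ℝ) :
    Tendsto (fun ρ : ℝ => flashbackG (1/4) ρ μ3) atTop (𝓝 (3/32)) := by
  have e1 := flashback_aux_tendsto (-4/3) (-9/32 - 3*μ3/4) (-1/4) (by norm_num)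
  have e2 := flashback_aux_tendsto (-8/3) (3/16 + μ3) 0 (by norm_num)
  have e3 := flashback_aux_tendsto (-16/3) (-5/32 + μ3/4) (1/4) (by norm_num)
  have e4 := flashback_aux_tendsto (-20/3) (-5/32 - μ3/4) (-1/4) (by norm_num)
  have hsum := ((tendsto_const_nhds (x := (3/32 : ℝ)) (f := atTop)).add e1).add
    ((e2.add e3).add e4)
  simp only [add_zero] at hsum
  refine hsum.congr fun ρ => ?_
  show 3/32 + Real.exp ((-4/3) * ρ) * ((-9/32 - 3*μ3/4) + (-1/4) * ρ)
      + (Real.exp ((-8/3) * ρ) * ((3/16 + μ3) + 0 * ρ)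
        + Real.exp ((-16/3) * ρ) * ((-5/32 + μ3/4) + (1/4) * ρ)
        + Real.exp ((-20/3) * ρ) * ((-5/32 - μ3/4) + (-1/4) * ρ))
      = flashbackG (1/4) ρ μ3
  unfold flashbackG
  norm_num
  ring_nf

/-- At `μ2 = 1/2` the fixed-point expression is negative for `ρ ≥ 1`. -/
lemma flashback_half_neg (μ3 ρ : ℝ) (hμ3 : 0 ≤ μ3) (hρ : 1 ≤ ρ) :
    flashbackG (1/2) ρ μ3 < 0 := by
  have hE : flashbackG (1/2) ρ μ3 =
      Real.exp (-2*ρ) * (-1/4 - μ3/2 - ρ/2)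
      + Real.exp (-2*ρ)^2 * (-1/2 + 3*μ3/2 + ρ/2)
      + Real.exp (-2*ρ)^3 * (-3/4 - μ3/2 - ρ/2) := by
    have h2 : Real.exp (-2*ρ)^2 = Real.exp ((-4)*ρ) := by
      rw [← Real.exp_nat_mul]; ring_nf
    have h3 : Real.exp (-2*ρ)^3 = Real.exp ((-6)*ρ) := by
      rw [← Real.exp_nat_mul]; ring_nf
    rw [h2, h3]
    unfold flashbackG
    norm_num
    ring_nf
  rw [hE]
  set E := Real.exp (-2*ρ) with hEdef
  have hE0 : 0 < E := Real.exp_pos _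
  have hE3 : E ≤ 1/3 := by
    rw [hEdef, show (-2)*ρ = -(2*ρ) by ring, Real.exp_neg]
    rw [inv_le_comm₀ (Real.exp_pos _) (by norm_num)]
    calc ((1:ℝ)/3)⁻¹ = 3 := by norm_num
    _ ≤ 1 + 2*ρ := by linarith
    _ ≤ Real.exp (2*ρ) := Real.add_one_le_exp _ |>.trans_eq' (by ring)
  nlinarith [mul_pos hE0 hE0, mul_pos (mul_pos hE0 hE0) hE0,
    mul_nonneg (mul_nonneg hE0.le hE0.le) hμ3, mul_nonneg hE0.le hμ3,
    mul_le_of_le_one_left hE0.le (by linarith : E ≤ 1),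
    mul_nonneg (mul_nonneg (mul_nonneg hE0.le hE0.le) hE0.le) hμ3]

/-- `flashbackG · ρ μ3` is continuous on `[1/4, 1/2]`. -/
lemma flashback_continuousOn (ρ μ3 : ℝ) :
    ContinuousOn (fun m : ℝ => flashbackG m ρ μ3) (Set.Icc (1/4) (1/2)) := by
  have hne1 : ∀ m ∈ Set.Icc (1/4:ℝ) (1/2), m - 1 ≠ 0 := by
    intro m hm h
    have := hm.2
    simp only [Set.mem_Icc] at hm
    linarith [hm.2, sub_eq_zero.mp h]
  have hne2 : ∀ m ∈ Set.Icc (1/4:ℝ) (1/2), (m - 1) * m ≠ 0 := by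
    intro m hm
    refine mul_ne_zero (hne1 m hm) ?_
    simp only [Set.mem_Icc] at hm
    intro h; rw [h] at hm; linarith [hm.1]
  have hsub : ContinuousOn (fun m : ℝ => m - 1) (Set.Icc (1/4:ℝ) (1/2)) := by fun_prop
  have hmul : ContinuousOn (fun m : ℝ => (m - 1) * m) (Set.Icc (1/4:ℝ) (1/2)) := by fun_prop
  unfold flashbackG
  refine (((((by fun_prop : ContinuousOn
      (fun m : ℝ => m - 3 * m ^ 2 + 2 * m ^ 3) (Set.Icc (1/4) (1/2)))).add
    ((Real.continuous_exp.comp_continuousOn (continuousOn_const.div hsub hne1)).mul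
      (by fun_prop))).add
    ((Real.continuous_exp.comp_continuousOn (continuousOn_const.div hsub hne1)).mul
      (by fun_prop))).add
    ((Real.continuous_exp.comp_continuousOn (continuousOn_const.div hmul hne2)).mul
      (by fun_prop))).add
    ((Real.continuous_exp.comp_continuousOn ((by fun_prop : ContinuousOn
        (fun m : ℝ => (1 + m) * ρ) (Set.Icc (1/4) (1/2))).div hmul hne2)).mul
      (by fun_prop))

/-- Theorem 1 (existence of an equilibrium fixed point with `μ2 < 1/2`): for
`r1 = 0` and all sufficiently large reservation thresholds `ρ`, the fixed-point
equation `E[V_primary]·μ2 − E[V_secondary]·μ1 = 0` (with `μ1 = 1 − μ2`) has a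
solution with `0 < μ2 < 1/2`. -/
theorem flashback_fixed_point_exists
    (μ3 : ℝ) (hμ3 : 0 ≤ μ3) :
    ∃ ρ0 : ℝ, 0 < ρ0 ∧ ∀ ρ : ℝ, ρ0 ≤ ρ →
      ∃ μ2 : ℝ, 0 < μ2 ∧ μ2 < 1 / 2 ∧ flashbackG μ2 ρ μ3 = 0 := by
  have hpos : ∀ᶠ ρ : ℝ in atTop, 0 < flashbackG (1/4) ρ μ3 :=
    (flashback_quarter_tendsto μ3).eventually (eventually_gt_nhds (by norm_num))
  obtain ⟨R, hR⟩ := eventually_atTop.mp hpos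
  refine ⟨max R 1, lt_of_lt_of_le one_pos (le_max_right _ _), fun ρ hρ => ?_⟩
  have hρR : R ≤ ρ := le_trans (le_max_left _ _) hρ
  have hρ1 : (1:ℝ) ≤ ρ := le_trans (le_max_right _ _) hρ
  have h14 : 0 < flashbackG (1/4) ρ μ3 := hR ρ hρR
  have h12 : flashbackG (1/2) ρ μ3 < 0 := flashback_half_neg μ3 ρ hμ3 hρ1
  have hivt := intermediate_value_Ioo' (by norm_num : (1/4:ℝ) ≤ 1/2)
    (flashback_continuousOn ρ μ3)
  have h0 : (0:ℝ) ∈ Set.Ioo (flashbackG (1/2) ρ μ3) (flashbackG (1/4) ρ μ3) :=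
    ⟨h12, h14⟩
  obtain ⟨c, hc, hceq⟩ := hivt h0
  exact ⟨c, lt_trans (by norm_num) hc.1, hc.2, hceq⟩
end

section
/- Let μ1, μ2, μ3 > 0, ρ > 0, r1 ≥ 0 and 0 < r2 < 1 be real numbers. Define f : (0,∞)⁴ → ℝ by f(w, x, x', y) = 1[w > ρ]·(r1·w + 1[x < ρ]·r2·x + r2·y) + 1[w ≤ ρ]·1[x < ρ]·1[x' < x]·(r2·x + r2·y). Then the 4-fold Lebesgue integral ∫₀^∞∫₀^∞∫₀^∞∫₀^∞ f(w, x, x', y)·(1/μ1)·exp(−w/μ1)·(1/μ1)·exp(−x/μ1)·(1/μ2)·exp(−x'/μ2)·(1/μ3)·exp(−y/μ3) dw dx dx' dy equals r1·(ρ·exp(−ρ/μ1) + μ1·exp(−ρ/μ1)) + r2·exp(−ρ/μ1)·(μ1 − ρ·exp(−ρ/μ1) − μ1·exp(−ρ/μ1)) + r2·μ3·exp(−ρ/μ1) + r2·(1 − exp(−ρ/μ1))·[ −ρ·exp(−ρ/μ1)·(1 − exp(−ρ/μ2)) − μ1·exp(−ρ/μ1)·(1 − exp(−ρ/μ2)) −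 (ρ·μ1/(μ1+μ2))·exp(−ρ(μ1+μ2)/(μ1·μ2)) − (μ1²·μ2/(μ1+μ2)²)·exp(−ρ(μ1+μ2)/(μ1·μ2)) + μ1²·μ2/(μ1+μ2)² + (μ1²/(μ1+μ2))·(1 − exp(−ρ(μ1+μ2)/(μ1·μ2))) ] + r2·μ3·(1 − exp(−ρ/μ1))·[ (μ1/(μ1+μ2))·(1 − exp(−ρ(μ1+μ2)/(μ1·μ2))) − exp(−ρ/μ1)·(1 − exp(−ρ/μ2)) ]. (This is the expected per-round reward E[V_primary] of the primary (Flashback) builder.) -/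
/-!
Integrate out one variable at a time, innermost first: `W`, then `X`, then `X'`, then `Y`.
At every stage the integrand is, on finitely many intervals, an affine function times an
exponential density, and `(p x + q) e^{-x/μ} / μ` has the explicit antiderivative
`-(p (x + μ) + q) e^{-x/μ}`. The coupling `1[x' < x]` leaves, after integrating out `X`, a factor
`e^{-x'/μ1}`, and `e^{-x'/μ1} · e^{-x'/μ2} / μ2` is again an exponential density, of mean
`μ1 μ2 / (μ1 + μ2)`, up to the factor `μ1 / (μ1 + μ2)`. What remains after three integrations is
affine in `y`, so the last integral just substitutes `y = μ3`.
-/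

open MeasureTheory Set Filter Real Topology

noncomputable def expDensity (μ x : ℝ) : ℝ := 1 / μ * exp (-x / μ)

section ExpDensity

variable {μ : ℝ}

@[fun_prop]
theorem continuous_expDensity : Continuous (expDensity μ) := by
  unfold expDensity
  fun_prop

theorem tendsto_affine_mul_exp_neg_div_atTop (hμ : 0 < μ) (p q : ℝ) :
    Tendsto (fun x => (p * x + q) * exp (-x / μ)) atTop (𝓝 0) := by
  have hdiv := tendsto_id.atTop_div_const hμ
  have hx := ((tendsto_pow_mul_exp_neg_atTop_nhds_zero 1).comp hdiv).const_mul (p * μ)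
  have h1 := (tendsto_exp_neg_atTop_nhds_zero.comp hdiv).const_mul q
  refine ((hx.add h1).congr fun x => ?_).trans (by simp)
  simp only [Function.comp, id, pow_one, neg_div]
  field_simp

theorem hasDerivAt_antideriv_affine_mul_expDensity (hμ : μ ≠ 0) (p q x : ℝ) :
    HasDerivAt (fun x => -(p * (x + μ) + q) * exp (-x / μ))
      ((p * x + q) * expDensity μ x) x := by
  have hlin : HasDerivAt (fun x => -(p * (x + μ) + q)) (-p) x := by
    simpa using (((hasDerivAt_id' x).add_const μ).const_mul p |>.add_const q).fun_neg
  have hexp : HasDerivAt (fun x => exp (-x / μ)) (exp (-x / μ) * (-1 / μ)) x :=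
    ((hasDerivAt_id x).neg.div_const μ).exp
  refine (hlin.mul hexp).congr_deriv ?_
  simp only [expDensity]
  field_simp
  ring

theorem integrableOn_Ioi_affine_mul_expDensity (hμ : 0 < μ) (p q c : ℝ) :
    IntegrableOn (fun x => (p * x + q) * expDensity μ x) (Ioi c) := by
  have hlim := tendsto_affine_mul_exp_neg_div_atTop (μ := 2 * μ) (by positivity) (p / μ) (q / μ)
  refine integrable_of_isBigO_exp_neg (b := 1 / (2 * μ)) (by positivity) (by fun_prop) ?_
  refine ((hlim.isBigO_one ℝ).mul
    (Asymptotics.isBigO_refl (fun x => exp (-(1 / (2 * μ)) * x)) atTop)).congr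
    (fun x => ?_) (fun x => one_mul _)
  simp only [expDensity, mul_assoc, ← exp_add]
  rw [show -x / (2 * μ) + -(1 / (2 * μ)) * x = -x / μ by field_simp; ring]
  field_simp

theorem integral_Ioi_affine_mul_expDensity (hμ : 0 < μ) (p q c : ℝ) :
    ∫ x in Ioi c, (p * x + q) * expDensity μ x = (p * (c + μ) + q) * exp (-c / μ) := by
  have hlim : Tendsto (fun x => -(p * (x + μ) + q) * exp (-x / μ)) atTop (𝓝 0) := by
    refine ((tendsto_affine_mul_exp_neg_div_atTop hμ p (p * μ + q)).neg.congr fun x => ?_).trans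
      (by rw [neg_zero])
    ring
  rw [integral_Ioi_of_hasDerivAt_of_tendsto'
    (fun x _ => hasDerivAt_antideriv_affine_mul_expDensity hμ.ne' p q x)
    (integrableOn_Ioi_affine_mul_expDensity hμ p q c) hlim]
  ring

theorem integral_Ioc_affine_mul_expDensity (hμ : μ ≠ 0) (p q : ℝ) {c d : ℝ} (hcd : c ≤ d) :
    ∫ x in Ioc c d, (p * x + q) * expDensity μ x
      = (p * (c + μ) + q) * exp (-c / μ) - (p * (d + μ) + q) * exp (-d / μ) := by
  rw [← intervalIntegral.integral_of_le hcd, intervalIntegral.integral_eq_sub_of_hasDerivAt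
    (fun x _ => hasDerivAt_antideriv_affine_mul_expDensity hμ p q x)
    (Continuous.intervalIntegrable (by fun_prop) _ _)]
  ring

end ExpDensity

theorem exp_neg_div_mul_expDensity {μ1 μ2 : ℝ} (hμ1 : 0 < μ1) (hμ2 : 0 < μ2) (x : ℝ) :
    exp (-x / μ1) * expDensity μ2 x
      = μ1 / (μ1 + μ2) * expDensity (μ1 * μ2 / (μ1 + μ2)) x := by
  have hexp : -x / μ1 + -x / μ2 = -x / (μ1 * μ2 / (μ1 + μ2)) := by
    field_simp
    ring
  rw [expDensity, expDensity, ← hexp, exp_add]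
  field_simp

section IteMul

variable {α : Type*} {P : α → Prop} [DecidablePred P] {g : α → ℝ}

theorem ite_one_zero_mul_eq_indicator :
    (fun x => (if P x then (1 : ℝ) else 0) * g x) = {x | P x}.indicator g := by
  funext x
  by_cases h : P x <;> simp [h]

variable [MeasurableSpace α] {μ : Measure α} {s : Set α}

theorem IntegrableOn.ite_one_zero_mul (hg : IntegrableOn g s μ) (hP : MeasurableSet {x | P x}) :
    IntegrableOn (fun x => (if P x then (1 : ℝ) else 0) * g x) s μ := by
  rw [ite_one_zero_mul_eq_indicator]
  exact hg.indicator hP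

theorem setIntegral_ite_one_zero_mul (hP : MeasurableSet {x | P x}) :
    ∫ x in s, (if P x then (1 : ℝ) else 0) * g x ∂μ = ∫ x in s ∩ {x | P x}, g x ∂μ := by
  rw [ite_one_zero_mul_eq_indicator, setIntegral_indicator hP]

end IteMul

namespace Flashback

variable (μ1 μ2 ρ r1 r2 : ℝ)

noncomputable def reward (w x x' y : ℝ) : ℝ :=
  (if w > ρ then (1 : ℝ) else 0) * (r1 * w + (if x < ρ then (1 : ℝ) else 0) * r2 * x + r2 * y)
    + (if w ≤ ρ then (1 : ℝ) else 0) * (if x < ρ then (1 : ℝ) else 0)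
      * (if x' < x then (1 : ℝ) else 0) * (r2 * x + r2 * y)

/-- The mean of `reward ρ r1 r2 W x x' y` over `W` with density `expDensity μ1`;
`rewardMeanWX` and `rewardMeanWXX'` further average over `X` and then `X'`. -/
noncomputable def rewardMeanW (x x' y : ℝ) : ℝ :=
  (r1 * (ρ + μ1) + (if x < ρ then (1 : ℝ) else 0) * r2 * x + r2 * y) * exp (-ρ / μ1)
    + (if x < ρ then (1 : ℝ) else 0) * (if x' < x then (1 : ℝ) else 0) * (r2 * x + r2 * y)
      * (1 - exp (-ρ / μ1))

noncomputable def rewardMeanWX (x' y : ℝ) : ℝ :=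
  (r1 * (ρ + μ1) + r2 * y) * exp (-ρ / μ1) + r2 * exp (-ρ / μ1) * (μ1 - (ρ + μ1) * exp (-ρ / μ1))
    + (if x' < ρ then (1 : ℝ) else 0) * (r2 * (1 - exp (-ρ / μ1))
      * ((x' + μ1 + y) * exp (-x' / μ1) - (ρ + μ1 + y) * exp (-ρ / μ1)))

noncomputable def rewardMeanWXX' (y : ℝ) : ℝ :=
  (r1 * (ρ + μ1) + r2 * y) * exp (-ρ / μ1) + r2 * exp (-ρ / μ1) * (μ1 - (ρ + μ1) * exp (-ρ / μ1))
    + r2 * (1 - exp (-ρ / μ1)) * (μ1 / (μ1 + μ2) * ((μ1 * μ2 / (μ1 + μ2) + μ1 + y)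
        - (ρ + μ1 * μ2 / (μ1 + μ2) + μ1 + y) * exp (-ρ * (μ1 + μ2) / (μ1 * μ2)))
      - (ρ + μ1 + y) * exp (-ρ / μ1) * (1 - exp (-ρ / μ2)))

variable {μ1 μ2 ρ}

theorem integral_reward_mul_expDensity (hμ1 : 0 < μ1) (hρ : 0 ≤ ρ) (x x' y : ℝ) :
    ∫ w in Ioi 0, reward ρ r1 r2 w x x' y * expDensity μ1 w = rewardMeanW μ1 ρ r1 r2 x x' y := by
  set B := (if x < ρ then (1 : ℝ) else 0) * r2 * x + r2 * y
  set C := (if x < ρ then (1 : ℝ) else 0) * (if x' < x then (1 : ℝ) else 0) * (r2 * x + r2 * y)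
  have hsplit : (fun w => reward ρ r1 r2 w x x' y * expDensity μ1 w) = fun w =>
      (if ρ < w then (1 : ℝ) else 0) * ((r1 * w + B) * expDensity μ1 w)
        + (if w ≤ ρ then (1 : ℝ) else 0) * ((0 * w + C) * expDensity μ1 w) := by
    funext w
    simp only [reward, B, C]
    ring
  have hint (p q : ℝ) := integrableOn_Ioi_affine_mul_expDensity hμ1 p q 0
  rw [hsplit, integral_add (IntegrableOn.ite_one_zero_mul (hint _ _) measurableSet_Ioi)
      (IntegrableOn.ite_one_zero_mul (hint _ _) measurableSet_Iic),
    setIntegral_ite_one_zero_mul measurableSet_Ioi, setIntegral_ite_one_zero_mul measurableSet_Iic,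
    Ioi_def, Iic_def, inter_eq_right.2 (Ioi_subset_Ioi hρ), Ioi_inter_Iic,
    integral_Ioi_affine_mul_expDensity hμ1, integral_Ioc_affine_mul_expDensity hμ1.ne' _ _ hρ]
  simp only [rewardMeanW, B, C, zero_mul, zero_add, neg_zero, zero_div, exp_zero]
  ring

theorem integral_rewardMeanW_mul_expDensity (hμ1 : 0 < μ1) (hρ : 0 ≤ ρ) {x' : ℝ} (hx' : 0 ≤ x')
    (y : ℝ) :
    ∫ x in Ioi 0, rewardMeanW μ1 ρ r1 r2 x x' y * expDensity μ1 x
      = rewardMeanWX μ1 ρ r1 r2 x' y := by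
  set e := exp (-ρ / μ1)
  have hsplit : (fun x => rewardMeanW μ1 ρ r1 r2 x x' y * expDensity μ1 x) = fun x =>
      (0 * x + (r1 * (ρ + μ1) + r2 * y) * e) * expDensity μ1 x
        + (if x < ρ then (1 : ℝ) else 0) * ((r2 * e * x + 0) * expDensity μ1 x)
        + (if x' < x then (1 : ℝ) else 0) * ((if x < ρ then (1 : ℝ) else 0)
          * ((r2 * (1 - e) * x + r2 * (1 - e) * y) * expDensity μ1 x)) := by
    funext x
    simp only [rewardMeanW, e]
    ring
  have hint (p q : ℝ) := integrableOn_Ioi_affine_mul_expDensity hμ1 p q 0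
  have hint_lt (p q : ℝ) :=
    IntegrableOn.ite_one_zero_mul (P := (· < ρ)) (hint p q) measurableSet_Iio
  rw [hsplit, integral_add (Integrable.fun_add (hint _ _) (hint_lt _ _))
      (IntegrableOn.ite_one_zero_mul (hint_lt _ _) measurableSet_Ioi),
    integral_add (hint _ _) (hint_lt _ _),
    setIntegral_ite_one_zero_mul measurableSet_Iio, setIntegral_ite_one_zero_mul measurableSet_Ioi,
    setIntegral_ite_one_zero_mul measurableSet_Iio, Iio_def, Ioi_def, Ioi_inter_Iio,
    inter_eq_right.2 (Ioi_subset_Ioi hx'), Ioi_inter_Iio, integral_Ioi_affine_mul_expDensity hμ1,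
    ← integral_Ioc_eq_integral_Ioo, integral_Ioc_affine_mul_expDensity hμ1.ne' _ _ hρ]
  simp only [rewardMeanWX, zero_mul, zero_add, add_zero, neg_zero, zero_div, exp_zero, mul_one]
  by_cases hlt : x' < ρ
  · rw [← integral_Ioc_eq_integral_Ioo, integral_Ioc_affine_mul_expDensity hμ1.ne' _ _ hlt.le,
      if_pos hlt]
    ring
  · rw [Ioo_eq_empty hlt, setIntegral_empty, if_neg hlt]
    ring

theorem integral_rewardMeanWX_mul_expDensity (hμ1 : 0 < μ1) (hμ2 : 0 < μ2) (hρ : 0 ≤ ρ)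
    (y : ℝ) :
    ∫ x' in Ioi 0, rewardMeanWX μ1 ρ r1 r2 x' y * expDensity μ2 x'
      = rewardMeanWXX' μ1 μ2 ρ r1 r2 y := by
  set e := exp (-ρ / μ1)
  set s := r2 * (1 - e)
  set c := μ1 * μ2 / (μ1 + μ2)
  have hc : 0 < c := by positivity
  have hsplit : (fun x' => rewardMeanWX μ1 ρ r1 r2 x' y * expDensity μ2 x') = fun x' =>
      (0 * x' + ((r1 * (ρ + μ1) + r2 * y) * e + r2 * e * (μ1 - (ρ + μ1) * e)))
          * expDensity μ2 x'
        + (if x' < ρ then (1 : ℝ) else 0)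
          * ((s * μ1 / (μ1 + μ2) * x' + s * (μ1 + y) * (μ1 / (μ1 + μ2))) * expDensity c x'
            - (0 * x' + s * (ρ + μ1 + y) * e) * expDensity μ2 x') := by
    funext x'
    have hprod := exp_neg_div_mul_expDensity hμ1 hμ2 x'
    simp only [rewardMeanWX, e, s, c] at hprod ⊢
    linear_combination ((if x' < ρ then (1 : ℝ) else 0) * s * (x' + μ1 + y)) * hprod
  have hint (μ : ℝ) (hμ : 0 < μ) (p q : ℝ) := integrableOn_Ioi_affine_mul_expDensity hμ p q 0
  rw [hsplit, integral_add (hint μ2 hμ2 _ _) (IntegrableOn.ite_one_zero_mul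
      (Integrable.sub' (hint c hc _ _) (hint μ2 hμ2 _ _)) measurableSet_Iio),
    setIntegral_ite_one_zero_mul measurableSet_Iio, Iio_def, Ioi_inter_Iio,
    ← integral_Ioc_eq_integral_Ioo, integral_sub ((hint c hc _ _).mono_set Ioc_subset_Ioi_self)
      ((hint μ2 hμ2 _ _).mono_set Ioc_subset_Ioi_self),
    integral_Ioi_affine_mul_expDensity hμ2, integral_Ioc_affine_mul_expDensity hc.ne' _ _ hρ,
    integral_Ioc_affine_mul_expDensity hμ2.ne' _ _ hρ]
  simp only [rewardMeanWXX', e, s, c, div_div_eq_mul_div, zero_mul, zero_add, neg_zero,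
    zero_div, exp_zero, mul_one]
  field_simp
  ring

theorem integral_integral_rewardMeanW_mul_expDensity (hμ1 : 0 < μ1) (hμ2 : 0 < μ2)
    (hρ : 0 ≤ ρ) (y : ℝ) :
    ∫ x' in Ioi 0, (∫ x in Ioi 0, rewardMeanW μ1 ρ r1 r2 x x' y * expDensity μ1 x)
        * expDensity μ2 x'
      = rewardMeanWXX' μ1 μ2 ρ r1 r2 y := by
  rw [← integral_rewardMeanWX_mul_expDensity r1 r2 hμ1 hμ2 hρ]
  refine setIntegral_congr_fun measurableSet_Ioi fun x' hx' => ?_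
  rw [integral_rewardMeanW_mul_expDensity r1 r2 hμ1 hρ (le_of_lt hx')]

theorem integral_rewardMeanWXX'_mul_expDensity {μ3 : ℝ} (hμ3 : 0 < μ3) :
    ∫ y in Ioi 0, rewardMeanWXX' μ1 μ2 ρ r1 r2 y * expDensity μ3 y
      = rewardMeanWXX' μ1 μ2 ρ r1 r2 μ3 := by
  set g := rewardMeanWXX' μ1 μ2 ρ r1 r2
  obtain ⟨p, q, haffine⟩ : ∃ p q, ∀ y, g y = p * y + q :=
    ⟨g 1 - g 0, g 0, fun y => by simp only [g, rewardMeanWXX']; ring⟩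
  simp_rw [haffine, integral_Ioi_affine_mul_expDensity hμ3]
  simp

end Flashback

theorem flashback_primary_builder_reward_general
    (μ1 μ2 μ3 ρ r1 r2 : ℝ) (hμ1 : 0 < μ1) (hμ2 : 0 < μ2) (hμ3 : 0 < μ3)
    (hρ : 0 < ρ) :
    (∫ y in Set.Ioi (0:ℝ), ∫ x' in Set.Ioi (0:ℝ), ∫ x in Set.Ioi (0:ℝ),
      ∫ w in Set.Ioi (0:ℝ),
        ((if w > ρ then (1:ℝ) else 0) *
            (r1 * w + (if x < ρ then (1:ℝ) else 0) * r2 * x + r2 * y)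
          + (if w ≤ ρ then (1:ℝ) else 0) * (if x < ρ then (1:ℝ) else 0) *
            (if x' < x then (1:ℝ) else 0) * (r2 * x + r2 * y)) *
        ((1 / μ1) * Real.exp (-w / μ1)) * ((1 / μ1) * Real.exp (-x / μ1)) *
        ((1 / μ2) * Real.exp (-x' / μ2)) * ((1 / μ3) * Real.exp (-y / μ3)))
    = r1 * (ρ * Real.exp (-ρ / μ1) + μ1 * Real.exp (-ρ / μ1))
      + r2 * Real.exp (-ρ / μ1) *
          (μ1 - ρ * Real.exp (-ρ / μ1) - μ1 * Real.exp (-ρ / μ1))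
      + r2 * μ3 * Real.exp (-ρ / μ1)
      + r2 * (1 - Real.exp (-ρ / μ1)) *
          (-ρ * Real.exp (-ρ / μ1) * (1 - Real.exp (-ρ / μ2))
            - μ1 * Real.exp (-ρ / μ1) * (1 - Real.exp (-ρ / μ2))
            - (ρ * μ1 / (μ1 + μ2)) * Real.exp (-ρ * (μ1 + μ2) / (μ1 * μ2))
            - (μ1 ^ 2 * μ2 / (μ1 + μ2) ^ 2) * Real.exp (-ρ * (μ1 + μ2) / (μ1 * μ2))
            + μ1 ^ 2 * μ2 / (μ1 + μ2) ^ 2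
            + (μ1 ^ 2 / (μ1 + μ2)) * (1 - Real.exp (-ρ * (μ1 + μ2) / (μ1 * μ2))))
      + r2 * μ3 * (1 - Real.exp (-ρ / μ1)) *
          ((μ1 / (μ1 + μ2)) * (1 - Real.exp (-ρ * (μ1 + μ2) / (μ1 * μ2)))
            - Real.exp (-ρ / μ1) * (1 - Real.exp (-ρ / μ2))) := by
  show ∫ y in Ioi 0, ∫ x' in Ioi 0, ∫ x in Ioi 0, ∫ w in Ioi 0,
    Flashback.reward ρ r1 r2 w x x' y * expDensity μ1 w * expDensity μ1 x * expDensity μ2 x'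
      * expDensity μ3 y = _
  simp_rw [integral_mul_const, Flashback.integral_reward_mul_expDensity r1 r2 hμ1 hρ.le,
    Flashback.integral_integral_rewardMeanW_mul_expDensity r1 r2 hμ1 hμ2 hρ.le,
    Flashback.integral_rewardMeanWXX'_mul_expDensity r1 r2 hμ3, Flashback.rewardMeanWXX']
  field_simp
  ring

/-- Proposition 3 (primary builder reward): the expectation of the primary
(Flashback) builder's per-round reward, written as a 4-fold Lebesgue integral
against the product of exponential densities (with means `μ1, μ1, μ2, μ3` for
`W, X, X', Y` respectively), equals the stated closed form. -/
theorem flashback_primary_builder_reward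
    (μ1 μ2 μ3 ρ r1 r2 : ℝ) (hμ1 : 0 < μ1) (hμ2 : 0 < μ2) (hμ3 : 0 < μ3)
    (hρ : 0 < ρ) (hr1 : 0 ≤ r1) (hr2_pos : 0 < r2) (hr2_lt : r2 < 1) :
    (∫ y in Set.Ioi (0:ℝ), ∫ x' in Set.Ioi (0:ℝ), ∫ x in Set.Ioi (0:ℝ),
      ∫ w in Set.Ioi (0:ℝ),
        ((if w > ρ then (1:ℝ) else 0) *
            (r1 * w + (if x < ρ then (1:ℝ) else 0) * r2 * x + r2 * y)
          + (if w ≤ ρ then (1:ℝ) else 0) * (if x < ρ then (1:ℝ) else 0) *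
            (if x' < x then (1:ℝ) else 0) * (r2 * x + r2 * y)) *
        ((1 / μ1) * Real.exp (-w / μ1)) * ((1 / μ1) * Real.exp (-x / μ1)) *
        ((1 / μ2) * Real.exp (-x' / μ2)) * ((1 / μ3) * Real.exp (-y / μ3)))
    = r1 * (ρ * Real.exp (-ρ / μ1) + μ1 * Real.exp (-ρ / μ1))
      + r2 * Real.exp (-ρ / μ1) *
          (μ1 - ρ * Real.exp (-ρ / μ1) - μ1 * Real.exp (-ρ / μ1))
      + r2 * μ3 * Real.exp (-ρ / μ1)
      + r2 * (1 - Real.exp (-ρ / μ1)) *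
          (-ρ * Real.exp (-ρ / μ1) * (1 - Real.exp (-ρ / μ2))
            - μ1 * Real.exp (-ρ / μ1) * (1 - Real.exp (-ρ / μ2))
            - (ρ * μ1 / (μ1 + μ2)) * Real.exp (-ρ * (μ1 + μ2) / (μ1 * μ2))
            - (μ1 ^ 2 * μ2 / (μ1 + μ2) ^ 2) * Real.exp (-ρ * (μ1 + μ2) / (μ1 * μ2))
            + μ1 ^ 2 * μ2 / (μ1 + μ2) ^ 2
            + (μ1 ^ 2 / (μ1 + μ2)) * (1 - Real.exp (-ρ * (μ1 + μ2) / (μ1 * μ2))))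
      + r2 * μ3 * (1 - Real.exp (-ρ / μ1)) *
          ((μ1 / (μ1 + μ2)) * (1 - Real.exp (-ρ * (μ1 + μ2) / (μ1 * μ2)))
            - Real.exp (-ρ / μ1) * (1 - Real.exp (-ρ / μ2))) :=
  flashback_primary_builder_reward_general μ1 μ2 μ3 ρ r1 r2 hμ1 hμ2 hμ3 hρ
end

section
/- Let μ1, μ2 > 0 and ρ ≥ 0 be real numbers. Then the double Lebesgue integral ∫₀^∞∫₀^∞ 1[x < ρ]·1[y > x]·y·(1/μ1)·exp(−x/μ1)·(1/μ2)·exp(−y/μ2) dx dy equals μ2 + (μ1/(μ1+μ2))·ρ·exp(−ρ(μ1+μ2)/(μ1·μ2)) + (μ1²·μ2/(μ1+μ2)²)·exp(−ρ(μ1+μ2)/(μ1·μ2)) − μ1²·μ2/(μ1+μ2)² − ρ·exp(−ρ/μ1)·exp(−ρ/μ2) − μ2·exp(−ρ/μ1)·exp(−ρ/μ2). (Equivalently, for independent exponential random variables X with mean μ1 and X' with mean μ2, this is E[1{X < ρ, X' > X}·X'].) -/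
/-!
Integrating out `x` first gives the exponential CDF at `min ρ y`, so the left-hand side is
`∫_{y>0} y e^{-y/μ2} (1 - e^{-min ρ y / μ1}) / μ2`. On `(0, ρ]` this integrand is a combination
of `y e^{-a y}` for `a = 1/μ2` and `a = 1/μ1 + 1/μ2`, on `(ρ, ∞)` a multiple of the first, and
`y e^{-a y}` has the antiderivative `-(y/a + 1/a²) e^{-a y}`, which vanishes at `+∞`.
-/

open MeasureTheory Filter Topology Real Set

noncomputable def mulExpNegAntideriv (a t : ℝ) : ℝ := -(t / a + 1 / a ^ 2) * exp (-(a * t))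

section MulExpNeg

variable {a : ℝ}

lemma hasDerivAt_mulExpNegAntideriv (ha : a ≠ 0) (t : ℝ) :
    HasDerivAt (mulExpNegAntideriv a) (t * exp (-(a * t))) t := by
  have hlin : HasDerivAt (fun t : ℝ => -(t / a + 1 / a ^ 2)) (-(1 / a)) t :=
    (((hasDerivAt_id t).div_const a).add_const (1 / a ^ 2)).neg
  have hexp : HasDerivAt (fun t : ℝ => exp (-(a * t))) (exp (-(a * t)) * -a) t :=
    (hasDerivAt_exp _).comp t (((hasDerivAt_id t).const_mul a).neg.congr_deriv (by simp))
  refine (hlin.mul hexp).congr_deriv ?_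
  field_simp
  ring

lemma tendsto_mulExpNegAntideriv_atTop (ha : 0 < a) :
    Tendsto (mulExpNegAntideriv a) atTop (𝓝 0) := by
  have hat : Tendsto (fun t : ℝ => a * t) atTop atTop := tendsto_id.const_mul_atTop ha
  have hmul : Tendsto (fun t : ℝ => a * t * exp (-(a * t))) atTop (𝓝 0) := by
    simpa [Function.comp_def] using (tendsto_pow_mul_exp_neg_atTop_nhds_zero 1).comp hat
  have hexp : Tendsto (fun t : ℝ => exp (-(a * t))) atTop (𝓝 0) :=
    tendsto_exp_neg_atTop_nhds_zero.comp hat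
  have hsum := ((hmul.const_mul (1 / a ^ 2)).add (hexp.const_mul (1 / a ^ 2))).neg
  rw [mul_zero, add_zero, neg_zero] at hsum
  refine hsum.congr fun t => ?_
  simp only [mulExpNegAntideriv]
  field_simp

lemma intervalIntegral_mul_exp_neg_mul (ha : a ≠ 0) (p q : ℝ) :
    ∫ t in p..q, t * exp (-(a * t)) = mulExpNegAntideriv a q - mulExpNegAntideriv a p :=
  intervalIntegral.integral_eq_sub_of_hasDerivAt (fun t _ => hasDerivAt_mulExpNegAntideriv ha t)
    (Continuous.intervalIntegrable (by fun_prop) p q)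

lemma integrableOn_Ioi_mul_exp_neg_mul (ha : 0 < a) {ρ : ℝ} (hρ : 0 ≤ ρ) :
    IntegrableOn (fun t => t * exp (-(a * t))) (Ioi ρ) :=
  integrableOn_Ioi_deriv_of_nonneg' (fun t _ => hasDerivAt_mulExpNegAntideriv ha.ne' t)
    (fun _ ht => mul_nonneg (hρ.trans (le_of_lt ht)) (exp_nonneg _))
    (tendsto_mulExpNegAntideriv_atTop ha)

lemma integral_Ioi_mul_exp_neg_mul (ha : 0 < a) {ρ : ℝ} (hρ : 0 ≤ ρ) :
    ∫ t in Ioi ρ, t * exp (-(a * t)) = -mulExpNegAntideriv a ρ := by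
  rw [integral_Ioi_of_hasDerivAt_of_nonneg' (fun t _ => hasDerivAt_mulExpNegAntideriv ha.ne' t)
    (fun _ ht => mul_nonneg (hρ.trans (le_of_lt ht)) (exp_nonneg _))
    (tendsto_mulExpNegAntideriv_atTop ha), zero_sub]

end MulExpNeg

lemma integral_Ioo_zero_exp_density (c : ℝ) {m : ℝ} (hm : 0 ≤ m) :
    ∫ x in Ioo 0 m, 1 / c * exp (-x / c) = 1 - exp (-m / c) := by
  have hderiv : ∀ x ∈ uIcc 0 m, HasDerivAt (fun t => -exp (-t / c)) (1 / c * exp (-x / c)) x :=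
    fun x _ => ((hasDerivAt_exp _).comp x ((hasDerivAt_id x).neg.div_const c)).neg.congr_deriv
      (by simp only [Pi.neg_apply, id]; ring)
  rw [← integral_Ioc_eq_integral_Ioo, ← intervalIntegral.integral_of_le hm,
    intervalIntegral.integral_eq_sub_of_hasDerivAt hderiv
      (Continuous.intervalIntegrable (by fun_prop) 0 m)]
  simp only [neg_zero, zero_div, exp_zero]
  ring

lemma integral_Ioi_mul_exp_density_mul_one_sub_exp_min {μ1 μ2 ρ : ℝ} (hμ1 : 0 < μ1)
    (hμ2 : 0 < μ2) (hρ : 0 ≤ ρ) :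
    ∫ y in Ioi 0, y * (1 / μ2 * exp (-y / μ2)) * (1 - exp (-min ρ y / μ1)) =
      1 / μ2 * (mulExpNegAntideriv (1 / μ2) ρ - mulExpNegAntideriv (1 / μ2) 0
        - (mulExpNegAntideriv (1 / μ1 + 1 / μ2) ρ - mulExpNegAntideriv (1 / μ1 + 1 / μ2) 0))
      - 1 / μ2 * (1 - exp (-ρ / μ1)) * mulExpNegAntideriv (1 / μ2) ρ := by
  set a := 1 / μ2
  set b := 1 / μ1 + 1 / μ2
  have ha : 0 < a := by positivity
  have hb : 0 < b := by positivity
  have hfin : EqOn (fun y => y * (a * exp (-y / μ2)) * (1 - exp (-min ρ y / μ1)))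
      (fun y => a * (y * exp (-(a * y))) - a * (y * exp (-(b * y)))) (Ioc 0 ρ) := by
    intro y hy
    dsimp only
    rw [min_eq_right hy.2, show -(b * y) = -y / μ1 + -y / μ2 by ring, exp_add,
      show -(a * y) = -y / μ2 by ring]
    ring
  have htail : EqOn (fun y => y * (a * exp (-y / μ2)) * (1 - exp (-min ρ y / μ1)))
      (fun y => a * (1 - exp (-ρ / μ1)) * (y * exp (-(a * y)))) (Ioi ρ) := by
    intro y hy
    dsimp only
    rw [min_eq_left (mem_Ioi.mp hy).le, show -(a * y) = -y / μ2 by ring]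
    ring
  rw [← Ioc_union_Ioi_eq_Ioi hρ, setIntegral_union (Ioc_disjoint_Ioi le_rfl) measurableSet_Ioi
      (Continuous.integrableOn_Ioc (by fun_prop))
      (IntegrableOn.congr_fun ((integrableOn_Ioi_mul_exp_neg_mul ha hρ).const_mul _) htail.symm
        measurableSet_Ioi),
    setIntegral_congr_fun measurableSet_Ioc hfin, setIntegral_congr_fun measurableSet_Ioi htail,
    ← intervalIntegral.integral_of_le hρ,
    intervalIntegral.integral_sub (Continuous.intervalIntegrable (by fun_prop) 0 ρ)
      (Continuous.intervalIntegrable (by fun_prop) 0 ρ),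
    intervalIntegral.integral_const_mul, intervalIntegral.integral_const_mul, integral_const_mul,
    intervalIntegral_mul_exp_neg_mul ha.ne', intervalIntegral_mul_exp_neg_mul hb.ne',
    integral_Ioi_mul_exp_neg_mul ha hρ]
  ring

/-- For independent exponentials `X` (mean `μ1`) and `X'` (mean `μ2`),
`E[1{X < ρ, X' > X}·X']` equals the stated closed form. -/
theorem exp_indicator_lt_gt_mul_snd
    (μ1 μ2 ρ : ℝ) (hμ1 : 0 < μ1) (hμ2 : 0 < μ2) (hρ : 0 ≤ ρ) :
    (∫ y in Set.Ioi (0:ℝ), ∫ x in Set.Ioi (0:ℝ),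
        (if x < ρ then (1:ℝ) else 0) * (if y > x then (1:ℝ) else 0) * y *
          ((1 / μ1) * Real.exp (-x / μ1)) * ((1 / μ2) * Real.exp (-y / μ2)))
    = μ2 + (μ1 / (μ1 + μ2)) * ρ * Real.exp (-ρ * (μ1 + μ2) / (μ1 * μ2))
      + (μ1 ^ 2 * μ2 / (μ1 + μ2) ^ 2) * Real.exp (-ρ * (μ1 + μ2) / (μ1 * μ2))
      - μ1 ^ 2 * μ2 / (μ1 + μ2) ^ 2
      - ρ * Real.exp (-ρ / μ1) * Real.exp (-ρ / μ2)
      - μ2 * Real.exp (-ρ / μ1) * Real.exp (-ρ / μ2) := by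
  rw [setIntegral_congr_fun measurableSet_Ioi
    (g := fun y => y * (1 / μ2 * exp (-y / μ2)) * (1 - exp (-min ρ y / μ1))) fun y hy => ?_]
  · rw [integral_Ioi_mul_exp_density_mul_one_sub_exp_min hμ1 hμ2 hρ]
    simp only [mulExpNegAntideriv]
    rw [show -ρ * (μ1 + μ2) / (μ1 * μ2) = -ρ / μ1 + -ρ / μ2 by field_simp; ring,
      show -((1 / μ1 + 1 / μ2) * ρ) = -ρ / μ1 + -ρ / μ2 by ring,
      show -(1 / μ2 * ρ) = -ρ / μ2 by ring, exp_add]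
    simp only [mul_zero, neg_zero, exp_zero]
    field_simp
    ring
  · dsimp only
    rw [← integral_Ioo_zero_exp_density μ1 (le_min hρ (le_of_lt hy)), ← integral_const_mul,
      ← Ioi_inter_Iio, ← setIntegral_indicator measurableSet_Iio]
    refine integral_congr_ae (ae_of_all _ fun x => ?_)
    by_cases hxρ : x < ρ
    · by_cases hxy : x < y
      · simp only [indicator_apply, mem_Iio, lt_min hxρ hxy, hxρ, gt_iff_lt, hxy, if_true]
        ring
      · simp [hxy]
    · simp [hxρ]
end

section
/- Let μ1, μ2 > 0 and ρ ≥ 0 be real numbers. Then the Lebesgue integral ∫₀^∞ exp(−min(ρ, x)/μ1)·(1/μ2)·exp(−x/μ2) dx equals (μ1/(μ1+μ2))·(1 − exp(−ρ(μ1+μ2)/(μ1·μ2))) + exp(−ρ/μ1)·exp(−ρ/μ2). (Equivalently, for an exponential random variable X' with mean μ2, this is E[exp(−min(ρ, X')/μ1)].) -/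
/-!
Split the integral at `ρ`. On `(0, ρ]` the two exponentials merge into a single one of rate
`1/μ1 + 1/μ2`, which integrates to the first summand. On `(ρ, ∞)` the factor
`exp (-ρ / μ1)` is constant and what remains is the tail `exp (-ρ / μ2)` of the exponential
distribution of mean `μ2`.
-/

open MeasureTheory Set Real

lemma integral_exp_mul {c : ℝ} (hc : c ≠ 0) (a b : ℝ) :
    ∫ x in a..b, exp (c * x) = (exp (c * b) - exp (c * a)) / c := by
  rw [intervalIntegral.integral_comp_mul_left (fun x => exp x) hc, integral_exp, smul_eq_mul,
    inv_mul_eq_div]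

lemma neg_div_eq_neg_inv_mul (x μ : ℝ) : -x / μ = -μ⁻¹ * x := by ring

lemma integrableOn_Ioi_inv_mul_exp_neg_div {μ : ℝ} (hμ : 0 < μ) (c : ℝ) :
    IntegrableOn (fun x => 1 / μ * exp (-x / μ)) (Ioi c) := by
  simp_rw [neg_div_eq_neg_inv_mul]
  exact (integrableOn_exp_mul_Ioi (by simpa using hμ) c).const_mul _

lemma integral_Ioi_inv_mul_exp_neg_div {μ : ℝ} (hμ : 0 < μ) (c : ℝ) :
    ∫ x in Ioi c, 1 / μ * exp (-x / μ) = exp (-c / μ) := by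
  simp_rw [neg_div_eq_neg_inv_mul]
  rw [integral_const_mul, integral_exp_mul_Ioi (by simpa using hμ) c]
  field_simp

lemma integrableOn_Ioi_comp_min_mul {g f : ℝ → ℝ} {a ρ : ℝ} (hg : Continuous g)
    (hf : IntegrableOn f (Ioi a)) :
    IntegrableOn (fun x => g (min ρ x) * f x) (Ioi a) := by
  obtain ⟨C, hC⟩ := (isCompact_Icc (a := min a ρ) (b := ρ)).exists_bound_of_continuousOn
    hg.continuousOn
  refine hf.bdd_mul (c := C) (hg.comp (continuous_const.min continuous_id)).aestronglyMeasurable ?_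
  refine (ae_restrict_iff' measurableSet_Ioi).2 (ae_of_all _ fun x (hx : a < x) => hC _ ?_)
  exact ⟨le_min (min_le_right _ _) ((min_le_left _ _).trans hx.le), min_le_left _ _⟩

lemma integral_Ioi_comp_min_mul {g f : ℝ → ℝ} {a ρ : ℝ} (hg : Continuous g)
    (hf : IntegrableOn f (Ioi a)) (haρ : a ≤ ρ) :
    ∫ x in Ioi a, g (min ρ x) * f x = (∫ x in a..ρ, g x * f x) + g ρ * ∫ x in Ioi ρ, f x := by
  have hint := integrableOn_Ioi_comp_min_mul (ρ := ρ) hg hf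
  rw [← intervalIntegral.integral_interval_add_Ioi hint (hint.mono_set (Ioi_subset_Ioi haρ)),
    ← integral_const_mul]
  congr 1
  · refine intervalIntegral.integral_congr fun x hx => ?_
    rw [uIcc_of_le haρ] at hx
    simp only [min_eq_right hx.2]
  · refine setIntegral_congr_fun measurableSet_Ioi fun x (hx : ρ < x) => ?_
    simp only [min_eq_left hx.le]

/-- For an exponential random variable `X'` with mean `μ2`,
`E[exp(−min(ρ, X')/μ1)]` equals the stated closed form. -/
theorem exp_min_expectation
    (μ1 μ2 ρ : ℝ) (hμ1 : 0 < μ1) (hμ2 : 0 < μ2) (hρ : 0 ≤ ρ) :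
    (∫ x in Set.Ioi (0:ℝ),
        Real.exp (-(min ρ x) / μ1) * ((1 / μ2) * Real.exp (-x / μ2)))
    = (μ1 / (μ1 + μ2)) * (1 - Real.exp (-ρ * (μ1 + μ2) / (μ1 * μ2)))
      + Real.exp (-ρ / μ1) * Real.exp (-ρ / μ2) := by
  rw [integral_Ioi_comp_min_mul (g := fun y => exp (-y / μ1)) (by fun_prop)
    (integrableOn_Ioi_inv_mul_exp_neg_div hμ2 0) hρ, integral_Ioi_inv_mul_exp_neg_div hμ2]
  have hrate : -(μ1 + μ2) / (μ1 * μ2) ≠ 0 := div_ne_zero (by linarith) (mul_pos hμ1 hμ2).ne'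
  have hmerge : ∀ x, exp (-x / μ1) * (1 / μ2 * exp (-x / μ2))
      = 1 / μ2 * exp (-(μ1 + μ2) / (μ1 * μ2) * x) := fun x => by
    rw [mul_left_comm, ← exp_add]; congr 2; field_simp; ring
  simp_rw [hmerge]
  rw [intervalIntegral.integral_const_mul, integral_exp_mul hrate,
    mul_zero, exp_zero, show -(μ1 + μ2) / (μ1 * μ2) * ρ = -ρ * (μ1 + μ2) / (μ1 * μ2) by ring]
  field_simp
  ring
end
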